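/- (Restriction of a block module to a subposet.) Let k be a field, let B ⊆ ℝ² be a nonempty block with block module M_B, let U ⊆ ℝ², and let ⪯ be a partial order on U that is contained in the product order ≤ of ℝ² (s ⪯ t implies s ≤ t). Let M_B|_{(U,⪯)} denote the restriction of M_B to the poset (U,⪯) (the functor with the spaces of M_B at points of U and the maps of M_B for pairs s ⪯ t). Let {C_i}_{i∈I} be the equivalence classes of the equivalence relation on B ∩ U generated by the restriction of ⪯ to B ∩ U, and for each i let M_{C_i} be the functor on (U,⪯) with value k at each point of C_i and 0 elsewhere, with identity maps between ⪯-comparable points of C_i and zero maps otherwise. Then M_B|_{(U,⪯)} is isomorphic to ⊕_{i∈I} M_{C_i}; each M_{C_i} is indecomposable; and the decomposition is unique up to isomorphism and reordering of the terms. -/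

import Mathlib

attribute [local instance] Classical.propDecidable
set_option linter.unusedVariables false

/-- A persistence module over a preorder `P` with coefficients in a field `k`. -/
structure PersMod (P : Type) [Preorder P] (k : Type) [Field k] where
  space : P → Type
  [isAddCommGroup : ∀ p, AddCommGroup (space p)]
  [isModule : ∀ p, Module k (space p)]
  map : ∀ {s t : P}, s ≤ t → (space s →ₗ[k] space t)
  map_refl : ∀ t : P, map (le_refl t) = LinearMap.id
  map_trans : ∀ {s t u : P} (h₁ : s ≤ t) (h₂ : t ≤ u),
    map (h₁.trans h₂) = (map h₂).comp (map h₁)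

attribute [instance] PersMod.isAddCommGroup PersMod.isModule

variable {P : Type} [Preorder P] {k : Type} [Field k]

/-- Pointwise finite-dimensionality. -/
def PersMod.pfd (M : PersMod P k) : Prop := ∀ t : P, FiniteDimensional k (M.space t)

/-- Isomorphism of persistence modules: a family of linear equivalences commuting
with the structure maps. -/
def PersMod.Iso (M N : PersMod P k) : Prop :=
  ∃ e : ∀ t : P, M.space t ≃ₗ[k] N.space t,
    ∀ {s t : P} (h : s ≤ t) (x : M.space s), e t (M.map h x) = N.map h (e s x)

/-- Pointwise direct sum of a family of persistence modules. -/
def PersMod.dSum {I : Type} (Ms : I → PersMod P k) : PersMod P k where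
  space t := Π₀ i : I, (Ms i).space t
  map h := DFinsupp.mapRange.linearMap (fun i => (Ms i).map h)
  map_refl t := by
    simp only [PersMod.map_refl]
    exact DFinsupp.mapRange.linearMap_id
  map_trans h₁ h₂ := by
    have h : (fun i => (Ms i).map (h₁.trans h₂))
        = fun i => ((Ms i).map h₂).comp ((Ms i).map h₁) := by
      funext i
      exact (Ms i).map_trans h₁ h₂
    beta_reduce
    rw [h]
    exact DFinsupp.mapRange.linearMap_comp (fun i => (Ms i).map h₂) (fun i => (Ms i).map h₁)

/-- The subspace of `k` which is everything if `t ∈ C` and `0` otherwise. -/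
def setSpace (k : Type) [Field k] {P : Type} (C : Set P) (t : P) : Submodule k k where
  carrier := {x : k | t ∉ C → x = 0}
  add_mem' := by
    intro a b ha hb h
    rw [ha h, hb h, add_zero]
  zero_mem' := fun _ => rfl
  smul_mem' := by
    intro c x hx h
    rw [hx h, smul_zero]

/-- The "indicator" persistence module of a convex subset `C` of `P`: it has a copy of
`k` at every point of `C` and `0` elsewhere; the maps between two comparable points of
`C` are identities, and the other maps are zero. -/
noncomputable def setModule (k : Type) [Field k] {P : Type} [Preorder P] (C : Set P)
    (hC : ∀ ⦃s t u : P⦄, s ≤ t → t ≤ u → s ∈ C → u ∈ C → t ∈ C) : PersMod P k where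
  space t := ↥(setSpace k C t)
  map {s t} h :=
    { toFun := fun x => ⟨if s ∈ C ∧ t ∈ C then (x : k) else 0, by
        intro ht
        by_cases hs : s ∈ C ∧ t ∈ C
        · exact absurd hs.2 ht
        · simp [hs]⟩
      map_add' := by
        intro x y
        apply Subtype.ext
        by_cases hs : s ∈ C ∧ t ∈ C <;> simp [hs]
      map_smul' := by
        intro c x
        apply Subtype.ext
        by_cases hs : s ∈ C ∧ t ∈ C <;> simp [hs] }
  map_refl t := by
    apply LinearMap.ext
    intro x
    apply Subtype.ext
    by_cases ht : t ∈ C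
    · simp [ht]
    · simp [ht, x.2 ht]
  map_trans {s t u} h₁ h₂ := by
    apply LinearMap.ext
    intro x
    apply Subtype.ext
    by_cases hs : s ∈ C
    · by_cases hu : u ∈ C
      · have ht : t ∈ C := hC h₁ h₂ hs hu
        simp [hs, ht, hu]
      · simp [hu]
    · simp [hs, x.2 hs]

/-- A cut of a linearly ordered set: a partition into a lower part and an
upward-closed upper part. -/
structure Cut (α : Type) [LinearOrder α] where
  neg : Set α
  pos : Set α
  union_eq : neg ∪ pos = Set.univ
  inter_eq : neg ∩ pos = ∅
  lt : ∀ x ∈ neg, ∀ y ∈ pos, x < y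

variable {α : Type} [LinearOrder α]

lemma Cut.mem_pos_of_le (c : Cut α) {x y : α} (hx : x ∈ c.pos) (h : x ≤ y) : y ∈ c.pos := by
  have hy : y ∈ c.neg ∪ c.pos := c.union_eq ▸ Set.mem_univ y
  rcases hy with hy | hy
  · exact absurd h (not_le_of_gt (c.lt y hy x hx))
  · exact hy

lemma Cut.mem_neg_of_le (c : Cut α) {x y : α} (hx : x ∈ c.neg) (h : y ≤ x) : y ∈ c.neg := by
  have hy : y ∈ c.neg ∪ c.pos := c.union_eq ▸ Set.mem_univ y
  rcases hy with hy | hy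
  · exact hy
  · exact absurd h (not_le_of_gt (c.lt x hx y hy))

/-- Blocks of `α × α`: birth quadrants, death quadrants, horizontal bands
and vertical bands. -/
def IsBlock (B : Set (α × α)) : Prop :=
  (∃ c d : Cut α, B = c.pos ×ˢ d.pos) ∨
  (∃ c d : Cut α, B = c.neg ×ˢ d.neg) ∨
  (∃ c d : Cut α, B = Set.univ ×ˢ (c.pos ∩ d.neg)) ∨
  (∃ c d : Cut α, B = (c.pos ∩ d.neg) ×ˢ Set.univ)

lemma IsBlock.convex {B : Set (α × α)} (hB : IsBlock B) :
    ∀ ⦃s t u : α × α⦄, s ≤ t → t ≤ u → s ∈ B → u ∈ B → t ∈ B := by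
  intro s t u h₁ h₂ hs hu
  rcases hB with ⟨c, d, rfl⟩ | ⟨c, d, rfl⟩ | ⟨c, d, rfl⟩ | ⟨c, d, rfl⟩
  · exact ⟨c.mem_pos_of_le hs.1 h₁.1, d.mem_pos_of_le hs.2 h₁.2⟩
  · exact ⟨c.mem_neg_of_le hu.1 h₂.1, d.mem_neg_of_le hu.2 h₂.2⟩
  · exact ⟨Set.mem_univ _, c.mem_pos_of_le hs.2.1 h₁.2, d.mem_neg_of_le hu.2.2 h₂.2⟩
  · exact ⟨⟨c.mem_pos_of_le hs.1.1 h₁.1, d.mem_neg_of_le hu.1.2 h₂.1⟩, Set.mem_univ _⟩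

/-- The block module associated to a block `B`. -/
noncomputable def blockModule (k : Type) [Field k] {α : Type} [LinearOrder α] (B : Set (α × α))
    (hB : IsBlock B) : PersMod (α × α) k :=
  setModule k B hB.convex

/-- Exactness of a persistence bimodule. -/
def IsExactBimod {α β : Type} [Preorder α] [Preorder β] {k : Type} [Field k]
    (M : PersMod (α × β) k) : Prop :=
  ∀ (s t : α × β) (h : s ≤ t),
    ∀ (y : M.space (t.1, s.2)) (z : M.space (s.1, t.2)),
      (M.map (show (t.1, s.2) ≤ t from ⟨le_rfl, h.2⟩) y =
        M.map (show (s.1, t.2) ≤ t from ⟨h.1, le_rfl⟩) z) ↔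
      ∃ x : M.space s,
        M.map (show s ≤ (t.1, s.2) from ⟨h.1, le_rfl⟩) x = y ∧
        M.map (show s ≤ (s.1, t.2) from ⟨le_rfl, h.2⟩) x = z

variable {P Q : Type} [Preorder P] [Preorder Q] {k : Type} [Field k]

/-- Restriction of a persistence module along a monotone map of preorders
(e.g. the inclusion of a subposet). -/
noncomputable def restrictMod (f : Q → P) (hf : ∀ {a b : Q}, a ≤ b → f a ≤ f b)
    (M : PersMod P k) : PersMod Q k where
  space q := M.space (f q)
  map h := M.map (hf h)
  map_refl t := M.map_refl (f t)
  map_trans h₁ h₂ := M.map_trans (hf h₁) (hf h₂)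

/-- Binary pointwise direct sum of persistence modules. -/
noncomputable def PersMod.dSum₂ (M N : PersMod P k) : PersMod P k where
  space t := M.space t × N.space t
  map h := (M.map h).prodMap (N.map h)
  map_refl t := by
    beta_reduce
    rw [M.map_refl, N.map_refl]
    exact LinearMap.prodMap_id
  map_trans h₁ h₂ := by
    beta_reduce
    rw [M.map_trans h₁ h₂, N.map_trans h₁ h₂]
    exact LinearMap.ext fun x => rfl

/-- The zero persistence module predicate. -/
def PersMod.IsZero (M : PersMod P k) : Prop := ∀ t : P, ∀ x : M.space t, x = 0

/-- A persistence module is indecomposable if it is nonzero and in every splitting as a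
(binary pointwise) direct sum one summand is zero. -/
def PersMod.Indecomposable (M : PersMod P k) : Prop :=
  ¬ M.IsZero ∧ ∀ N₁ N₂ : PersMod P k, M.Iso (N₁.dSum₂ N₂) → N₁.IsZero ∨ N₂.IsZero

/-- The restriction to a subposet (embedded by `f`) of the relation "comparable within
`B`": `a` and `b` are related if both lie over `B` and `a ≤ b`. -/
def blockRel (B : Set (ℝ × ℝ)) (f : Q → ℝ × ℝ) (a b : Q) : Prop :=
  f a ∈ B ∧ f b ∈ B ∧ a ≤ b

lemma blockRel_eqvGen_mem {B : Set (ℝ × ℝ)} {f : Q → ℝ × ℝ} {x y : Q}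
    (h : Relation.EqvGen (blockRel B f) x y) : x = y ∨ (f x ∈ B ∧ f y ∈ B) := by
  induction h with
  | rel a b hab => exact Or.inr ⟨hab.1, hab.2.1⟩
  | refl a => exact Or.inl rfl
  | symm a b hab ih =>
      rcases ih with h' | h'
      · exact Or.inl h'.symm
      · exact Or.inr ⟨h'.2, h'.1⟩
  | trans a b c hab hbc ih₁ ih₂ =>
      rcases ih₁ with h₁ | h₁
      · rcases ih₂ with h₂ | h₂
        · exact Or.inl (h₁.trans h₂)
        · exact Or.inr ⟨h₁ ▸ h₂.1, h₂.2⟩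
      · rcases ih₂ with h₂ | h₂
        · exact Or.inr ⟨h₁.1, h₂ ▸ h₁.2⟩
        · exact Or.inr ⟨h₁.1, h₂.2⟩

/-- Equivalence classes, for the equivalence relation generated by comparability within
(the part of a subposet lying over) a block `B`, are convex. -/
lemma blockRel_class_convex {B : Set (ℝ × ℝ)} (hB : IsBlock B) (f : Q → ℝ × ℝ)
    (hf : ∀ {a b : Q}, a ≤ b → f a ≤ f b) (Ci : Set Q)
    (hcl : ∃ x : Q, f x ∈ B ∧ Ci = {y | Relation.EqvGen (blockRel B f) x y}) :
    ∀ ⦃s t u : Q⦄, s ≤ t → t ≤ u → s ∈ Ci → u ∈ Ci → t ∈ Ci := by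
  obtain ⟨x, hxB, rfl⟩ := hcl
  intro s t u h₁ h₂ hs hu
  have hfs : f s ∈ B := by
    rcases blockRel_eqvGen_mem hs with h | h
    · exact h ▸ hxB
    · exact h.2
  have hfu : f u ∈ B := by
    rcases blockRel_eqvGen_mem hu with h | h
    · exact h ▸ hxB
    · exact h.2
  have hft : f t ∈ B := hB.convex (hf h₁) (hf h₂) hfs hfu
  exact Relation.EqvGen.trans x s t hs (Relation.EqvGen.rel s t ⟨hfs, hft, h₁⟩)

section Aux

variable {Q : Type} [PartialOrder Q] {k : Type} [Field k]

/-! ### Class lemmas -/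

lemma class_mem_B {B : Set (ℝ × ℝ)} {f : Q → ℝ × ℝ} {Ci : Set Q}
    (hcl : ∃ x : Q, f x ∈ B ∧ Ci = {y | Relation.EqvGen (blockRel B f) x y})
    {t : Q} (ht : t ∈ Ci) : f t ∈ B := by
  obtain ⟨x, hxB, rfl⟩ := hcl
  rcases blockRel_eqvGen_mem ht with h | h
  · exact h ▸ hxB
  · exact h.2

lemma class_closed {B : Set (ℝ × ℝ)} {f : Q → ℝ × ℝ} {Ci : Set Q}
    (hcl : ∃ x : Q, f x ∈ B ∧ Ci = {y | Relation.EqvGen (blockRel B f) x y})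
    {s t : Q} (hs : s ∈ Ci) (h : Relation.EqvGen (blockRel B f) s t) : t ∈ Ci := by
  obtain ⟨x, hxB, rfl⟩ := hcl
  exact Relation.EqvGen.trans x s t hs h

lemma class_step {B : Set (ℝ × ℝ)} {f : Q → ℝ × ℝ} {Ci : Set Q}
    (hcl : ∃ x : Q, f x ∈ B ∧ Ci = {y | Relation.EqvGen (blockRel B f) x y})
    {s t : Q} (h : s ≤ t) (hfs : f s ∈ B) (hft : f t ∈ B) : s ∈ Ci ↔ t ∈ Ci := by
  constructor
  · intro hs
    exact class_closed hcl hs (Relation.EqvGen.rel s t ⟨hfs, hft, h⟩)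
  · intro ht
    exact class_closed hcl ht (Relation.EqvGen.symm s t (Relation.EqvGen.rel s t ⟨hfs, hft, h⟩))

lemma class_eq {B : Set (ℝ × ℝ)} {f : Q → ℝ × ℝ} {Ci Ci' : Set Q}
    (hcl : ∃ x : Q, f x ∈ B ∧ Ci = {y | Relation.EqvGen (blockRel B f) x y})
    (hcl' : ∃ x : Q, f x ∈ B ∧ Ci' = {y | Relation.EqvGen (blockRel B f) x y})
    {t : Q} (ht : t ∈ Ci) (ht' : t ∈ Ci') : Ci = Ci' := by
  obtain ⟨x, hxB, rfl⟩ := hcl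
  obtain ⟨x', hxB', rfl⟩ := hcl'
  have hxx' : Relation.EqvGen (blockRel B f) x' x :=
    Relation.EqvGen.trans x' t x ht' (Relation.EqvGen.symm x t ht)
  ext y
  constructor
  · intro hy
    exact Relation.EqvGen.trans x' x y hxx' hy
  · intro hy
    exact Relation.EqvGen.trans x x' y (Relation.EqvGen.symm x' x hxx') hy

end Aux

section Aux2

variable {Q : Type} [PartialOrder Q] {k : Type} [Field k]

lemma class_self_mem {B : Set (ℝ × ℝ)} {f : Q → ℝ × ℝ} {Ci : Set Q} {x : Q}
    (hx : Ci = {y | Relation.EqvGen (blockRel B f) x y}) : x ∈ Ci := by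
  subst hx
  exact Relation.EqvGen.refl x

lemma class_mem_eqvGen {B : Set (ℝ × ℝ)} {f : Q → ℝ × ℝ} {Ci : Set Q} {x t : Q}
    (hx : Ci = {y | Relation.EqvGen (blockRel B f) x y}) (ht : t ∈ Ci) :
    Relation.EqvGen (blockRel B f) x t := by
  subst hx
  exact ht

end Aux2
attribute [reducible] setModule blockModule restrictMod PersMod.dSum PersMod.dSum₂
section Piece

variable {P : Type} [Preorder P] {k : Type} [Field k]

/-- The submodule used for restricting a persistence module to a subset. -/
noncomputable def pieceSub (M : PersMod P k) (S : Set P) (t : P) : Submodule k (M.space t) :=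
  if t ∈ S then ⊤ else ⊥

/-- Condition under which a persistence module splits along a subset `S`. -/
def PieceCond (M : PersMod P k) (S : Set P) : Prop :=
  ∀ ⦃s t : P⦄ (h : s ≤ t), ¬(s ∈ S ↔ t ∈ S) → ∀ x : M.space s, M.map h x = 0

lemma PieceCond.compl {M : PersMod P k} {S : Set P} (hS : PieceCond M S) :
    PieceCond M Sᶜ := by
  intro s t h hst x
  apply hS h _ x
  simp only [Set.mem_compl_iff] at hst
  tauto

/-- The restriction of a persistence module to a subset along which it splits. -/
noncomputable def pieceMod (M : PersMod P k) (S : Set P) (hS : PieceCond M S) :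
    PersMod P k where
  space t := ↥(pieceSub M S t)
  map {s t} h :=
    { toFun := fun x => ⟨M.map h x.1, by
        by_cases ht : t ∈ S
        · simp [pieceSub, ht]
        · by_cases hs : s ∈ S
          · have h0 := hS h (by simp [hs, ht]) x.1
            simp [pieceSub, ht, h0]
          · have hx : (x : M.space s) = 0 := by
              have h2 := x.2
              simpa [pieceSub, hs] using h2
            simp [pieceSub, ht, hx]⟩
      map_add' := fun x y => Subtype.ext (by simp)
      map_smul' := fun c x => Subtype.ext (by simp) }
  map_refl t := LinearMap.ext fun x => Subtype.ext (by simp [M.map_refl])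
  map_trans h₁ h₂ := LinearMap.ext fun x => Subtype.ext (by simp [M.map_trans h₁ h₂])

lemma pieceMod_not_isZero (M : PersMod P k) (S : Set P) (hS : PieceCond M S)
    {t : P} (ht : t ∈ S) {x : M.space t} (hx : x ≠ 0) :
    ¬ (pieceMod M S hS).IsZero := by
  intro h
  have hmem : x ∈ pieceSub M S t := by simp [pieceSub, ht]
  have h0 := h t ⟨x, hmem⟩
  exact hx (congrArg Subtype.val h0)

/-- A persistence module is isomorphic to the direct sum of its restrictions to `S`
and `Sᶜ`, provided it splits along `S`. -/
lemma pieceMod_iso (M : PersMod P k) (S : Set P) (hS : PieceCond M S) :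
    M.Iso ((pieceMod M S hS).dSum₂ (pieceMod M Sᶜ hS.compl)) := by
  refine ⟨fun t =>
    { toFun := fun x => (⟨if t ∈ S then x else 0, by
        by_cases ht : t ∈ S <;> simp [pieceSub, ht]⟩,
        ⟨if t ∈ Sᶜ then x else 0, by
        by_cases ht : t ∈ S <;> simp [pieceSub, ht]⟩)
      map_add' := fun x y => by
        refine Prod.ext (Subtype.ext ?_) (Subtype.ext ?_)
        · show (if t ∈ S then x + y else 0)
            = (if t ∈ S then x else 0) + (if t ∈ S then y else 0)
          split_ifs <;> simp
        · show (if t ∈ Sᶜ then x + y else 0)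
            = (if t ∈ Sᶜ then x else 0) + (if t ∈ Sᶜ then y else 0)
          split_ifs <;> simp
      map_smul' := fun c x => by
        refine Prod.ext (Subtype.ext ?_) (Subtype.ext ?_)
        · show (if t ∈ S then c • x else 0) = c • (if t ∈ S then x else 0)
          split_ifs <;> simp
        · show (if t ∈ Sᶜ then c • x else 0) = c • (if t ∈ Sᶜ then x else 0)
          split_ifs <;> simp
      invFun := fun p => p.1.1 + p.2.1
      left_inv := fun x => by
        by_cases ht : t ∈ S <;> simp [ht]
      right_inv := fun p => by
        obtain ⟨⟨av, ha⟩, ⟨bv, hb⟩⟩ := p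
        by_cases ht : t ∈ S
        · have hb0 : bv = 0 := by simpa [pieceSub, ht] using hb
          refine Prod.ext (Subtype.ext ?_) (Subtype.ext ?_) <;> simp [ht, hb0]
        · have ha0 : av = 0 := by simpa [pieceSub, ht] using ha
          refine Prod.ext (Subtype.ext ?_) (Subtype.ext ?_) <;> simp [ht, ha0] },
    ?_⟩
  intro s t h x
  refine Prod.ext (Subtype.ext ?_) (Subtype.ext ?_)
  · show (if t ∈ S then M.map h x else 0) = M.map h (if s ∈ S then x else 0)
    by_cases hs : s ∈ S <;> by_cases ht : t ∈ S
    · simp [hs, ht]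
    · simp [hs, ht, hS h (by simp [hs, ht]) x]
    · simp [hs, ht, hS h (by simp [hs, ht]) x]
    · simp [hs, ht]
  · show (if t ∈ Sᶜ then M.map h x else 0) = M.map h (if s ∈ Sᶜ then x else 0)
    by_cases hs : s ∈ S <;> by_cases ht : t ∈ S
    · simp [hs, ht]
    · simp [hs, ht, hS h (by simp [hs, ht]) x]
    · simp [hs, ht, hS h (by simp [hs, ht]) x]
    · simp [hs, ht]

end Piece
set_option linter.unusedSectionVars false

section Part1

variable {Q : Type} [PartialOrder Q] {k : Type} [Field k]

variable {B : Set (ℝ × ℝ)} {f : Q → ℝ × ℝ} {I : Type} {C : I → Set Q}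

/-- The decomposition equivalence at a single point. -/
noncomputable def part1equiv (hcover : ∀ x : Q, f x ∈ B → ∃ i, x ∈ C i)
    (hdisj : ∀ i i' (t : Q), t ∈ C i → t ∈ C i' → i = i')
    (hCB : ∀ i ⦃t : Q⦄, t ∈ C i → f t ∈ B) (t : Q) :
    ↥(setSpace k B (f t)) ≃ₗ[k] Π₀ i, ↥(setSpace k (C i) t) where
  toFun x :=
    if h : f t ∈ B then
      DFinsupp.single (hcover t h).choose
        ⟨(x : k), fun hc => absurd (hcover t h).choose_spec hc⟩
    else 0
  map_add' x y := by
    by_cases h : f t ∈ B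
    · rw [dif_pos h, dif_pos h, dif_pos h, ← DFinsupp.single_add]
      congr 1
    · rw [dif_neg h, dif_neg h, dif_neg h, add_zero]
  map_smul' c x := by
    by_cases h : f t ∈ B
    · rw [dif_pos h, dif_pos h, RingHom.id_apply, ← DFinsupp.single_smul]
      congr 1
    · rw [dif_neg h, dif_neg h, RingHom.id_apply, smul_zero]
  invFun d := ⟨if h : f t ∈ B then ((d (hcover t h).choose : ↥(setSpace k (C _) t)) : k)
      else 0, fun hB => dif_neg hB⟩
  left_inv x := by
    apply Subtype.ext
    by_cases h : f t ∈ B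
    · show (if h' : f t ∈ B then _ else _) = (x : k)
      rw [dif_pos h]
      show ((dite _ _ _ : Π₀ i, ↥(setSpace k (C i) t)) _ : k) = (x : k)
      rw [dif_pos h, DFinsupp.single_eq_same]
    · show (if h' : f t ∈ B then _ else _) = (x : k)
      rw [dif_neg h, x.2 h]
  right_inv d := by
    dsimp only
    by_cases h : f t ∈ B
    · rw [dif_pos h]
      ext i
      by_cases hi : i = (hcover t h).choose
      · subst hi
        rw [DFinsupp.single_eq_same]
        exact dif_pos h
      · rw [DFinsupp.single_eq_of_ne hi]
        have hti : t ∉ C i := fun hti => hi (hdisj i _ t hti (hcover t h).choose_spec)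
        exact ((d i).2 hti).symm
    · rw [dif_neg h]
      ext i
      have hti : t ∉ C i := fun hti => h (hCB i hti)
      rw [DFinsupp.zero_apply]
      exact ((d i).2 hti).symm

lemma part1equiv_apply_of_mem (hcover : ∀ x : Q, f x ∈ B → ∃ i, x ∈ C i)
    (hdisj : ∀ i i' (t : Q), t ∈ C i → t ∈ C i' → i = i')
    (hCB : ∀ i ⦃t : Q⦄, t ∈ C i → f t ∈ B) {t : Q} (ht : f t ∈ B)
    {i₀ : I} (hi₀ : t ∈ C i₀) (x : ↥(setSpace k B (f t))) :
    part1equiv hcover hdisj hCB t x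
      = DFinsupp.single i₀ ⟨(x : k), fun hc => absurd hi₀ hc⟩ := by
  show (if h : f t ∈ B then _ else _) = _
  rw [dif_pos ht]
  obtain rfl : (hcover t ht).choose = i₀ := hdisj _ _ t (hcover t ht).choose_spec hi₀
  rfl

lemma part1equiv_apply_of_not_mem (hcover : ∀ x : Q, f x ∈ B → ∃ i, x ∈ C i)
    (hdisj : ∀ i i' (t : Q), t ∈ C i → t ∈ C i' → i = i')
    (hCB : ∀ i ⦃t : Q⦄, t ∈ C i → f t ∈ B) {t : Q} (ht : f t ∉ B)
    (x : ↥(setSpace k B (f t))) :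
    part1equiv hcover hdisj hCB t x = 0 := by
  show (if h : f t ∈ B then _ else _) = _
  rw [dif_neg ht]

end Part1
section SetMod

variable {Q : Type} [PartialOrder Q] {k : Type} [Field k]

lemma setModule_map_val {C : Set Q} (hC : ∀ ⦃s t u : Q⦄, s ≤ t → t ≤ u → s ∈ C → u ∈ C → t ∈ C)
    {s t : Q} (h : s ≤ t) (x : ↥(setSpace k C s)) :
    (show ↥(setSpace k C t) from (setModule k C hC).map h x).1
      = if s ∈ C ∧ t ∈ C then (x : k) else 0 := rfl

lemma setModule_map_bij {Ci : Set Q} (hC : ∀ ⦃s t u : Q⦄, s ≤ t → t ≤ u → s ∈ Ci → u ∈ Ci → t ∈ Ci)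
    {s t : Q} (h : s ≤ t) (hs : s ∈ Ci) (ht : t ∈ Ci) :
    Function.Bijective ((setModule k Ci hC).map h) := by
  constructor
  · intro x y hxy
    apply Subtype.ext
    have h1 : (show ↥(setSpace k Ci t) from (setModule k Ci hC).map h x).1
        = (show ↥(setSpace k Ci t) from (setModule k Ci hC).map h y).1 :=
      congrArg Subtype.val hxy
    rw [setModule_map_val hC h, setModule_map_val hC h, if_pos ⟨hs, ht⟩,
      if_pos ⟨hs, ht⟩] at h1
    exact h1
  · intro y
    obtain ⟨yv, hy2⟩ := (y : ↥(setSpace k Ci t))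
    refine ⟨⟨yv, fun hc => absurd hs hc⟩, Subtype.ext ?_⟩
    rw [setModule_map_val hC h, if_pos ⟨hs, ht⟩]

lemma setSpace_subsingleton {C : Set Q} {t : Q} (ht : t ∉ C) (x : ↥(setSpace k C t)) :
    x = 0 := Subtype.ext (x.2 ht)

/-- A nonempty indicator module of an equivalence class is indecomposable. -/
lemma setModule_indec {B : Set (ℝ × ℝ)} {f : Q → ℝ × ℝ} {Ci : Set Q}
    (hcl : ∃ x : Q, f x ∈ B ∧ Ci = {y | Relation.EqvGen (blockRel B f) x y})
    (hC : ∀ ⦃s t u : Q⦄, s ≤ t → t ≤ u → s ∈ Ci → u ∈ Ci → t ∈ Ci) :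
    (setModule k Ci hC).Indecomposable := by
  obtain ⟨x₀, hx₀B, hCi⟩ := hcl
  have hx₀ : x₀ ∈ Ci := by rw [hCi]; exact Relation.EqvGen.refl x₀
  constructor
  · intro h0
    have h1 := h0 x₀ ⟨1, fun hc => absurd hx₀ hc⟩
    have := congrArg Subtype.val h1
    exact one_ne_zero this
  · intro N₁ N₂ ⟨e, he⟩
    -- "N is nonzero at t"
    by_contra hcon
    push_neg at hcon
    obtain ⟨hN₁, hN₂⟩ := hcon
    rw [PersMod.IsZero] at hN₁ hN₂
    push_neg at hN₁ hN₂
    obtain ⟨t₁, x₁, hx₁⟩ := hN₁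
    obtain ⟨t₂, x₂, hx₂⟩ := hN₂
    -- both t₁ t₂ lie in Ci
    have ht₁ : t₁ ∈ Ci := by
      by_contra ht
      have : (x₁, (0 : N₂.space t₁)) = 0 := by
        rw [← (e t₁).apply_symm_apply (x₁, 0), setSpace_subsingleton ht ((e t₁).symm (x₁, 0)),
          map_zero]
      exact hx₁ (congrArg Prod.fst this)
    have ht₂ : t₂ ∈ Ci := by
      by_contra ht
      have : ((0 : N₁.space t₂), x₂) = 0 := by
        rw [← (e t₂).apply_symm_apply (0, x₂), setSpace_subsingleton ht ((e t₂).symm (0, x₂)),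
          map_zero]
      exact hx₂ (congrArg Prod.snd this)
    -- at a point of Ci, N₁ and N₂ cannot both be nonzero
    have hone : ∀ t : Q, t ∈ Ci → ∀ (y₁ : N₁.space t) (y₂ : N₂.space t),
        y₁ ≠ 0 → y₂ ≠ 0 → False := by
      intro t ht y₁ y₂ hy₁ hy₂
      set z₁ : ↥(setSpace k Ci t) := (e t).symm (y₁, 0) with hz₁
      set z₂ : ↥(setSpace k Ci t) := (e t).symm (0, y₂) with hz₂
      have hz₁0 : z₁ ≠ 0 := by
        intro h0
        have : (y₁, (0 : N₂.space t)) = 0 := by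
          rw [← (e t).apply_symm_apply (y₁, 0), ← hz₁, h0, map_zero]
        exact hy₁ (congrArg Prod.fst this)
      have hz₂0 : z₂ ≠ 0 := by
        intro h0
        have : ((0 : N₁.space t), y₂) = 0 := by
          rw [← (e t).apply_symm_apply (0, y₂), ← hz₂, h0, map_zero]
        exact hy₂ (congrArg Prod.snd this)
      have ha : (z₁ : k) ≠ 0 := fun h => hz₁0 (Subtype.ext h)
      have hb : (z₂ : k) ≠ 0 := fun h => hz₂0 (Subtype.ext h)
      have hsmul : (z₂ : k) • z₁ = (z₁ : k) • z₂ := by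
        apply Subtype.ext
        show (z₂ : k) * (z₁ : k) = (z₁ : k) * (z₂ : k)
        ring
      have := congrArg (e t) hsmul
      rw [map_smul, map_smul, (e t).apply_symm_apply, (e t).apply_symm_apply] at this
      have hfst : (z₂ : k) • y₁ = (z₁ : k) • (0 : N₁.space t) := congrArg Prod.fst this
      rw [smul_zero] at hfst
      rcases smul_eq_zero.mp hfst with h | h
      · exact hb h
      · exact hy₁ h
    -- nonzeroness of N₁ propagates along the equivalence relation within Ci
    have hstep : ∀ s t : Q, s ≤ t → s ∈ Ci → t ∈ Ci →
        ((∃ y : N₁.space s, y ≠ 0) ↔ (∃ y : N₁.space t, y ≠ 0)) := by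
      intro s t h hs ht
      have hbij : Function.Bijective ((setModule k Ci hC).map h) := setModule_map_bij hC h hs ht
      have hbij2 : Function.Bijective
          (((N₁.map h).prodMap (N₂.map h)) ∘ (e s)) := by
        have hcomp : ∀ z, ((N₁.map h).prodMap (N₂.map h)) ((e s) z)
            = (e t) ((setModule k Ci hC).map h z) := fun z => (he h z).symm
        have : (((N₁.map h).prodMap (N₂.map h)) ∘ (e s))
            = (e t) ∘ ((setModule k Ci hC).map h) := funext hcomp
        rw [this]
        exact (e t).bijective.comp hbij
      have hbij3 : Function.Bijective ((N₁.map h).prodMap (N₂.map h)) := by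
        have := hbij2.comp (e s).symm.bijective
        have heq : (((N₁.map h).prodMap (N₂.map h)) ∘ (e s)) ∘ (e s).symm
            = ((N₁.map h).prodMap (N₂.map h)) := by
          funext z
          simp
        rwa [heq] at this
      constructor
      · rintro ⟨y, hy⟩
        refine ⟨N₁.map h y, fun h0 => hy ?_⟩
        have : ((N₁.map h).prodMap (N₂.map h)) (y, 0) = 0 := by
          rw [LinearMap.prodMap_apply]
          simp [h0]
        have := hbij3.1 (by rw [this, map_zero] : ((N₁.map h).prodMap (N₂.map h)) (y, 0)
          = ((N₁.map h).prodMap (N₂.map h)) 0)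
        exact congrArg Prod.fst this
      · rintro ⟨y, hy⟩
        obtain ⟨⟨a, b⟩, hab⟩ := hbij3.2 (y, 0)
        rw [LinearMap.prodMap_apply] at hab
        have h1 : N₁.map h a = y := congrArg Prod.fst hab
        refine ⟨a, fun h0 => hy ?_⟩
        rw [← h1, h0, map_zero]
    -- propagate along the generated equivalence relation
    have hprop : ∀ a b : Q, Relation.EqvGen (blockRel B f) a b → a ∈ Ci →
        ((∃ y : N₁.space a, y ≠ 0) ↔ (∃ y : N₁.space b, y ≠ 0)) := by
      intro a b hab
      induction hab with
      | rel a b hab =>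
          intro ha
          have hb : b ∈ Ci := class_closed ⟨x₀, hx₀B, hCi⟩ ha (Relation.EqvGen.rel a b hab)
          exact hstep a b hab.2.2 ha hb
      | refl a => exact fun _ => Iff.rfl
      | symm a b hab ih =>
          intro hb
          have ha : a ∈ Ci := class_closed ⟨x₀, hx₀B, hCi⟩ hb
            (Relation.EqvGen.symm a b hab)
          exact (ih ha).symm
      | trans a b c hab hbc ih₁ ih₂ =>
          intro ha
          have hb : b ∈ Ci := class_closed ⟨x₀, hx₀B, hCi⟩ ha hab
          exact (ih₁ ha).trans (ih₂ hb)
    have h12 : Relation.EqvGen (blockRel B f) t₁ t₂ := by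
      have h1 : Relation.EqvGen (blockRel B f) x₀ t₁ := by rw [hCi] at ht₁; exact ht₁
      have h2 : Relation.EqvGen (blockRel B f) x₀ t₂ := by rw [hCi] at ht₂; exact ht₂
      exact Relation.EqvGen.trans t₁ x₀ t₂ (Relation.EqvGen.symm x₀ t₁ h1) h2
    have : ∃ y : N₁.space t₂, y ≠ 0 := (hprop t₁ t₂ h12 ht₁).mp ⟨x₁, hx₁⟩
    obtain ⟨y, hy⟩ := this
    exact hone t₂ ht₂ y x₂ hy hx₂

end SetMod
section IndMap

variable {Q : Type} {k : Type} [Field k]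

/-- Inclusion of the indicator space of a class into the indicator space of the block. -/
noncomputable def indMap (k : Type) [Field k] {Q : Type} {B : Set (ℝ × ℝ)} {f : Q → ℝ × ℝ}
    (Ci : Set Q) (hCiB : ∀ ⦃t : Q⦄, t ∈ Ci → f t ∈ B) (t : Q) :
    ↥(setSpace k Ci t) →ₗ[k] ↥(setSpace k B (f t)) where
  toFun x := ⟨x.1, fun h => x.2 fun hc => h (hCiB hc)⟩
  map_add' x y := rfl
  map_smul' c x := rfl

@[simp] lemma indMap_val {B : Set (ℝ × ℝ)} {f : Q → ℝ × ℝ}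
    (Ci : Set Q) (hCiB : ∀ ⦃t : Q⦄, t ∈ Ci → f t ∈ B) (t : Q) (x : ↥(setSpace k Ci t)) :
    ((indMap k Ci hCiB t x : ↥(setSpace k B (f t))) : k) = (x : k) := rfl

end IndMap
/-- **Restriction of a block module to a subposet.** Let `B` be a nonempty block of
`ℝ²` and let `(U, ⪯)` be a subposet of `(ℝ², ≤)`, presented as a poset `Q` with an
injective map `f : Q → ℝ²` whose order is contained in the product order. Let
`(C i)_{i ∈ I}` enumerate (without repetition) the equivalence classes of the
equivalence relation generated by `⪯` on `B ∩ U`. Then the restriction of the block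
module `M_B` to `(U, ⪯)` is isomorphic to the direct sum of the indicator modules of
the classes `C i`; each of these is indecomposable; and the decomposition is unique up
to isomorphism and reordering of the terms. -/
theorem block_module_restriction_decomposition {k : Type} [Field k]
    {Q : Type} [PartialOrder Q] (B : Set (ℝ × ℝ)) (hB : IsBlock B) (hBne : B.Nonempty)
    (f : Q → ℝ × ℝ) (hfinj : Function.Injective f)
    (hf : ∀ {a b : Q}, a ≤ b → f a ≤ f b)
    {I : Type} (C : I → Set Q)
    (hclass : ∀ i, ∃ x : Q, f x ∈ B ∧ C i = {y | Relation.EqvGen (blockRel B f) x y})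
    (hcover : ∀ x : Q, f x ∈ B → ∃ i, x ∈ C i)
    (hCinj : Function.Injective C) :
    (restrictMod f hf (blockModule k B hB)).Iso
      (PersMod.dSum fun i =>
        setModule k (C i) (blockRel_class_convex hB f hf (C i) (hclass i))) ∧
    (∀ i, (setModule k (C i)
      (blockRel_class_convex hB f hf (C i) (hclass i))).Indecomposable) ∧
    ∀ (J : Type) (Ns : J → PersMod Q k), (∀ j, (Ns j).Indecomposable) →
      (restrictMod f hf (blockModule k B hB)).Iso (PersMod.dSum Ns) →
      ∃ σ : I ≃ J, ∀ i, (Ns (σ i)).Iso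
        (setModule k (C i) (blockRel_class_convex hB f hf (C i) (hclass i))) := by
  have hCB : ∀ i ⦃t : Q⦄, t ∈ C i → f t ∈ B := fun i t ht => class_mem_B (hclass i) ht
  have hdisj : ∀ i i' (t : Q), t ∈ C i → t ∈ C i' → i = i' :=
    fun i i' t hi hi' => hCinj (class_eq (hclass i) (hclass i') hi hi')
  refine ⟨⟨fun t => part1equiv hcover hdisj hCB t, ?_⟩, ?_, ?_⟩
  · -- Part 1: commutation of the decomposition isomorphism
    intro s t h x
    show part1equiv hcover hdisj hCB t ((setModule k B hB.convex).map (hf h) x)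
      = DFinsupp.mapRange.linearMap
          (fun i => (setModule k (C i) (blockRel_class_convex hB f hf (C i) (hclass i))).map h)
          (part1equiv hcover hdisj hCB s x)
    by_cases hfs : f s ∈ B
    · by_cases hft : f t ∈ B
      · obtain ⟨i₀, hi₀s⟩ := hcover s hfs
        have hi₀t : t ∈ C i₀ := (class_step (hclass i₀) h hfs hft).mp hi₀s
        rw [part1equiv_apply_of_mem hcover hdisj hCB hft hi₀t,
          part1equiv_apply_of_mem hcover hdisj hCB hfs hi₀s,
          DFinsupp.mapRange.linearMap_apply, DFinsupp.mapRange_single]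
        congr 1
        apply Subtype.ext
        show (show ↥(setSpace k B (f t)) from (setModule k B hB.convex).map (hf h) x).1 = _
        rw [setModule_map_val hB.convex (hf h) x, if_pos ⟨hfs, hft⟩,
          setModule_map_val (blockRel_class_convex hB f hf (C i₀) (hclass i₀)) h,
          if_pos ⟨hi₀s, hi₀t⟩]
      · rw [part1equiv_apply_of_not_mem hcover hdisj hCB hft]
        obtain ⟨i₀, hi₀s⟩ := hcover s hfs
        rw [part1equiv_apply_of_mem hcover hdisj hCB hfs hi₀s,
          DFinsupp.mapRange.linearMap_apply, DFinsupp.mapRange_single]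
        symm
        rw [DFinsupp.single_eq_zero]
        apply Subtype.ext
        rw [setModule_map_val (blockRel_class_convex hB f hf (C i₀) (hclass i₀)) h,
          if_neg (fun hc => hft (hCB i₀ hc.2))]
        rfl
    · have hx : x = 0 := Subtype.ext (x.2 hfs)
      rw [hx, map_zero, map_zero, map_zero, map_zero]
  · -- Part 2: indecomposability
    exact fun i => setModule_indec (hclass i) (blockRel_class_convex hB f hf (C i) (hclass i))
  · -- Part 3: uniqueness
    rintro J Ns hNindec ⟨e, he⟩
    have dext : ∀ {t : Q} (d d' : Π₀ j, (Ns j).space t), (∀ j, d j = d' j) → d = d' :=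
      fun d d' hdd => DFinsupp.ext hdd
    -- off the block, all summands vanish
    have P1 : ∀ (t : Q), f t ∉ B → ∀ (j : J) (x : (Ns j).space t), x = 0 := by
      intro t ht j x
      have h2 : (e t).symm (DFinsupp.single j x) = 0 :=
        setSpace_subsingleton ht ((e t).symm (DFinsupp.single j x))
      have h1 : (DFinsupp.single j x : Π₀ j, (Ns j).space t) = 0 := by
        rw [← (e t).apply_symm_apply (DFinsupp.single j x), h2, map_zero]
      rwa [DFinsupp.single_eq_zero] at h1
    -- at any point, at most one summand is nonzero
    have P2 : ∀ (t : Q) (j j' : J), j ≠ j' → ∀ (x : (Ns j).space t) (x' : (Ns j').space t),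
        x ≠ 0 → x' ≠ 0 → False := by
      intro t j j' hjj' x x' hx hx'
      set z : ↥(setSpace k B (f t)) := (e t).symm (DFinsupp.single j x) with hz
      set z' : ↥(setSpace k B (f t)) := (e t).symm (DFinsupp.single j' x') with hz'
      have hez : e t z = DFinsupp.single j x := (e t).apply_symm_apply _
      have hez' : e t z' = DFinsupp.single j' x' := (e t).apply_symm_apply _
      have hzk : (z : k) ≠ 0 := by
        intro h0
        have hz0 : z = 0 := Subtype.ext h0
        rw [hz0, map_zero] at hez
        have hez2 := hez.symm
        rw [DFinsupp.single_eq_zero] at hez2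
        exact hx hez2
      have hzk' : (z' : k) ≠ 0 := by
        intro h0
        have hz0 : z' = 0 := Subtype.ext h0
        rw [hz0, map_zero] at hez'
        have hez2 := hez'.symm
        rw [DFinsupp.single_eq_zero] at hez2
        exact hx' hez2
      have hsm : (z' : k) • z = (z : k) • z' := by
        apply Subtype.ext
        show (z' : k) * (z : k) = (z : k) * (z' : k)
        ring
      have hsm2 := congrArg (e t) hsm
      rw [map_smul, map_smul, hez, hez'] at hsm2
      have h3 : ((z' : k) • (DFinsupp.single j x : Π₀ j, (Ns j).space t)) j
          = ((z : k) • (DFinsupp.single j' x' : Π₀ j, (Ns j).space t)) j :=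
        congrArg (fun d : Π₀ j, (Ns j).space t => d j) hsm2
      rw [DFinsupp.smul_apply, DFinsupp.smul_apply, DFinsupp.single_eq_same,
        DFinsupp.single_eq_of_ne hjj', smul_zero] at h3
      rcases smul_eq_zero.mp h3 with h4 | h4
      · exact hzk' h4
      · exact hx h4
    -- on the block, some summand is nonzero
    have P3 : ∀ t : Q, f t ∈ B → ∃ j, ∃ x : (Ns j).space t, x ≠ 0 := by
      intro t ht
      by_contra hno
      push_neg at hno
      set y : ↥(setSpace k B (f t)) := ⟨1, fun hc => absurd ht hc⟩ with hy
      have hy0 : y ≠ 0 := fun h0 => one_ne_zero (congrArg Subtype.val h0)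
      have h0 : e t y = 0 := by
        refine dext _ _ fun j => ?_
        rw [DFinsupp.zero_apply]
        exact hno j _
      exact hy0 ((e t).injective (by rw [h0, map_zero]))
    -- applying the direct sum structure maps
    have hds : ∀ {s t : Q} (h : s ≤ t) (j : J) (x : (Ns j).space s),
        (PersMod.dSum Ns).map h (DFinsupp.single j x) = DFinsupp.single j ((Ns j).map h x) := by
      intro s t h j x
      show DFinsupp.mapRange.linearMap (fun j => (Ns j).map h) (DFinsupp.single j x) = _
      rw [DFinsupp.mapRange.linearMap_apply, DFinsupp.mapRange_single]
    have hda : ∀ {s t : Q} (h : s ≤ t) (d : Π₀ j, (Ns j).space s) (j : J),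
        DFinsupp.mapRange.linearMap (fun j => (Ns j).map h) d j = (Ns j).map h (d j) := by
      intro s t h d j
      rw [DFinsupp.mapRange.linearMap_apply, DFinsupp.mapRange_apply]
    -- nonzeroness propagates along comparabilities within the block
    have P4 : ∀ (s t : Q), s ≤ t → f s ∈ B → f t ∈ B → ∀ j : J,
        ((∃ x : (Ns j).space s, x ≠ 0) ↔ (∃ x : (Ns j).space t, x ≠ 0)) := by
      intro s t h hfs hft j
      have hbij : Function.Bijective ((setModule k B hB.convex).map (hf h)) :=
        setModule_map_bij hB.convex (hf h) hfs hft
      have hbij2 : Function.Bijective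
          (((PersMod.dSum Ns).map h) ∘ (e s)) := by
        have hcomp : (((PersMod.dSum Ns).map h) ∘ (e s))
            = (e t) ∘ ((restrictMod f hf (blockModule k B hB)).map h) :=
          funext fun z => (he h z).symm
        rw [hcomp]
        exact (e t).bijective.comp hbij
      have hbij3 : Function.Bijective ((PersMod.dSum Ns).map h
          (s := s) (t := t)) := by
        have hb := hbij2.comp (e s).symm.bijective
        have heq : ((((PersMod.dSum Ns).map h) ∘ (e s)) ∘ (e s).symm)
            = (((PersMod.dSum Ns).map h : _ →ₗ[k] _) : _ → _) := by
          funext z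
          simp
        rwa [heq] at hb
      constructor
      · rintro ⟨x, hx⟩
        refine ⟨(Ns j).map h x, fun h0 => hx ?_⟩
        have h1 : (PersMod.dSum Ns).map h (DFinsupp.single j x) = 0 := by
          rw [hds h j x, h0, DFinsupp.single_zero]
        have h2 : (DFinsupp.single j x : Π₀ j, (Ns j).space s) = 0 := by
          apply hbij3.1
          rw [h1, map_zero]
        rwa [DFinsupp.single_eq_zero] at h2
      · rintro ⟨y, hy⟩
        obtain ⟨d, hd⟩ := hbij3.2 (DFinsupp.single j y)
        have hd2 : DFinsupp.mapRange.linearMap (fun j => (Ns j).map h) d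
            = DFinsupp.single j y := hd
        have h3 := DFunLike.congr_fun hd2 j
        rw [DFinsupp.mapRange.linearMap_apply, DFinsupp.mapRange_apply,
          DFinsupp.single_eq_same] at h3
        refine ⟨(DFinsupp.lapply (R := k) j) d, fun h0 => hy ?_⟩
        rw [DFinsupp.lapply_apply] at h0
        rw [h0, map_zero] at h3
        exact h3.symm
    -- propagation along the generated equivalence relation
    have P6 : ∀ (a b : Q), Relation.EqvGen (blockRel B f) a b → ∀ j : J,
        ((∃ x : (Ns j).space a, x ≠ 0) ↔ (∃ x : (Ns j).space b, x ≠ 0)) := by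
      intro a b hab
      induction hab with
      | rel a b hab => exact fun j => P4 a b hab.2.2 hab.1 hab.2.1 j
      | refl a => exact fun j => Iff.rfl
      | symm a b hab ih => exact fun j => (ih j).symm
      | trans a b c hab hbc ih₁ ih₂ => exact fun j => (ih₁ j).trans (ih₂ j)
    -- base points of the classes
    have hxbB : ∀ i, f ((hclass i).choose) ∈ B := fun i => (hclass i).choose_spec.1
    have hxbC : ∀ i, (hclass i).choose ∈ C i :=
      fun i => class_self_mem (hclass i).choose_spec.2
    -- the assignment of classes to summands
    choose g hg using P3
    set σfun : I → J := fun i => g ((hclass i).choose) (hxbB i) with hσfun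
    have hσnz : ∀ i, ∃ x : (Ns (σfun i)).space ((hclass i).choose), x ≠ 0 :=
      fun i => hg _ (hxbB i)
    have P7 : ∀ i (t : Q), t ∈ C i → ∃ x : (Ns (σfun i)).space t, x ≠ 0 := by
      intro i t ht
      have hE : Relation.EqvGen (blockRel B f) ((hclass i).choose) t :=
        class_mem_eqvGen (hclass i).choose_spec.2 ht
      exact (P6 _ _ hE (σfun i)).mp (hσnz i)
    -- injectivity of the assignment
    have hσinj : Function.Injective σfun := by
      intro i i' hii'
      by_contra hne
      have hScond : PieceCond (Ns (σfun i)) (C i) := by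
        intro s t h hst x
        by_cases hNs : ∃ x' : (Ns (σfun i)).space s, x' ≠ 0
        · have hfs : f s ∈ B := by
            by_contra hfs
            obtain ⟨x', hx'⟩ := hNs
            exact hx' (P1 s hfs _ x')
          by_cases hsS : s ∈ C i
          · have htS : t ∉ C i := fun htS => hst ⟨fun _ => htS, fun _ => hsS⟩
            have hft : f t ∉ B := fun hft =>
              htS ((class_step (hclass i) h hfs hft).mp hsS)
            exact P1 t hft _ _
          · have htS : t ∈ C i := by tauto
            have hft : f t ∈ B := hCB i htS
            exact absurd ((class_step (hclass i) h hfs hft).mpr htS) hsS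
        · push_neg at hNs
          rw [hNs x, map_zero]
      rcases (hNindec (σfun i)).2 _ _ (pieceMod_iso (Ns (σfun i)) (C i) hScond) with h1 | h2
      · obtain ⟨x, hx⟩ := hσnz i
        exact pieceMod_not_isZero (Ns (σfun i)) (C i) hScond (hxbC i) hx h1
      · have h5 := hσnz i'
        rw [← hii'] at h5
        obtain ⟨x, hx⟩ := h5
        have hmem : (hclass i').choose ∈ (C i)ᶜ := by
          intro hmem
          exact hne (hdisj i i' _ hmem (hxbC i'))
        exact pieceMod_not_isZero (Ns (σfun i)) (C i)ᶜ hScond.compl hmem hx h2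
    -- surjectivity of the assignment
    have hσsurj : Function.Surjective σfun := by
      intro j
      have hnz := (hNindec j).1
      rw [PersMod.IsZero] at hnz
      push_neg at hnz
      obtain ⟨t, x, hx⟩ := hnz
      have hft : f t ∈ B := by
        by_contra hft
        exact hx (P1 t hft j x)
      obtain ⟨i, hti⟩ := hcover t hft
      refine ⟨i, ?_⟩
      by_contra hne
      obtain ⟨x', hx'⟩ := P7 i t hti
      exact P2 t _ j hne x' x hx' hx
    -- the support of each summand is exactly one class
    have P8 : ∀ i (t : Q), (∃ x : (Ns (σfun i)).space t, x ≠ 0) → t ∈ C i := by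
      intro i t ⟨x, hx⟩
      have hft : f t ∈ B := by
        by_contra hft
        exact hx (P1 t hft _ x)
      obtain ⟨i', hti'⟩ := hcover t hft
      obtain ⟨x', hx'⟩ := P7 i' t hti'
      have : σfun i' = σfun i := by
        by_contra hne
        exact P2 t _ _ hne x' x hx' hx
      rwa [hσinj this] at hti'
    refine ⟨Equiv.ofBijective σfun ⟨hσinj, hσsurj⟩, ?_⟩
    intro i
    show (Ns (σfun i)).Iso (setModule k (C i) (blockRel_class_convex hB f hf (C i) (hclass i)))
    -- the pointwise comparison map
    set φ : ∀ t : Q, ↥(setSpace k (C i) t) →ₗ[k] (Ns (σfun i)).space t :=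
      fun t => (DFinsupp.lapply (σfun i)).comp
        (((e t : (restrictMod f hf (blockModule k B hB)).space t ≃ₗ[k]
            (PersMod.dSum Ns).space t).toLinearMap).comp (indMap k (C i) (hCB i) t))
      with hφ
    have hφval : ∀ (t : Q) (x : ↥(setSpace k (C i) t)),
        φ t x = DFinsupp.lapply (R := k) (σfun i) (e t (indMap k (C i) (hCB i) t x)) :=
      fun t x => rfl
    -- the comparison map commutes with the inclusion
    have hind : ∀ (s t : Q) (h : s ≤ t) (x : ↥(setSpace k (C i) s)),
        indMap k (C i) (hCB i) t
            ((setModule k (C i) (blockRel_class_convex hB f hf (C i) (hclass i))).map h x)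
          = (setModule k B hB.convex).map (hf h) (indMap k (C i) (hCB i) s x) := by
      intro s t h x
      apply Subtype.ext
      show (show ↥(setSpace k (C i) t) from
          (setModule k (C i) (blockRel_class_convex hB f hf (C i) (hclass i))).map h x).1
        = (show ↥(setSpace k B (f t)) from
          (setModule k B hB.convex).map (hf h) (indMap k (C i) (hCB i) s x)).1
      rw [setModule_map_val, setModule_map_val]
      by_cases hsC : s ∈ C i
      · by_cases htC : t ∈ C i
        · rw [if_pos ⟨hsC, htC⟩, if_pos ⟨hCB i hsC, hCB i htC⟩, indMap_val]
        · rw [if_neg (fun hc => htC hc.2)]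
          by_cases hfB : f s ∈ B ∧ f t ∈ B
          · exact absurd ((class_step (hclass i) h hfB.1 hfB.2).mp hsC) htC
          · rw [if_neg hfB]
      · rw [if_neg (fun hc => hsC hc.1)]
        by_cases hfB : f s ∈ B ∧ f t ∈ B
        · rw [if_pos hfB, indMap_val]
          exact (x.2 hsC).symm
        · rw [if_neg hfB]
    -- the comparison map is bijective
    have hφbij : ∀ t : Q, Function.Bijective (φ t) := by
      intro t
      by_cases htC : t ∈ C i
      · obtain ⟨x₀, hx₀⟩ := P7 i t htC
        constructor
        · intro x y hxy
          have hdd : e t (indMap k (C i) (hCB i) t x) = e t (indMap k (C i) (hCB i) t y) := by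
            refine dext _ _ fun j' => ?_
            by_cases hj' : j' = σfun i
            · subst hj'
              have hxy2 := hxy
              rw [hφval, hφval, DFinsupp.lapply_apply, DFinsupp.lapply_apply] at hxy2
              exact hxy2
            · have hz : ∀ w : (Ns j').space t, w = 0 := by
                intro w
                by_contra hw
                exact P2 t j' (σfun i) hj' w x₀ hw hx₀
              exact (hz _).trans (hz _).symm
          have h2 := (e t).injective hdd
          have h3 := congrArg (fun w : ↥(setSpace k B (f t)) => (w : k)) h2
          exact Subtype.ext h3
        · intro y
          set z : ↥(setSpace k B (f t)) := (e t).symm (DFinsupp.single (σfun i) y) with hzdef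
          refine ⟨⟨(z : k), fun hc => absurd htC hc⟩, ?_⟩
          have hz2 : indMap k (C i) (hCB i) t ⟨(z : k), fun hc => absurd htC hc⟩ = z :=
            Subtype.ext rfl
          rw [hφval, hz2, hzdef, (e t).apply_symm_apply, DFinsupp.lapply_apply,
            DFinsupp.single_eq_same]
      · constructor
        · intro x y _
          rw [setSpace_subsingleton htC x, setSpace_subsingleton htC y]
        · intro y
          have hy : y = 0 := by
            by_contra hy
            exact htC (P8 i t ⟨y, hy⟩)
          exact ⟨0, by rw [map_zero, hy]⟩
    -- the comparison map commutes with the structure maps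
    have hφcomm : ∀ (s t : Q) (h : s ≤ t) (x : ↥(setSpace k (C i) s)),
        φ t ((setModule k (C i) (blockRel_class_convex hB f hf (C i) (hclass i))).map h x)
          = (Ns (σfun i)).map h (φ s x) := by
      intro s t h x
      rw [hφval, hind s t h x]
      have h1 : e t ((setModule k B hB.convex).map (hf h) (indMap k (C i) (hCB i) s x))
          = DFinsupp.mapRange.linearMap (fun j => (Ns j).map h)
              (e s (indMap k (C i) (hCB i) s x)) :=
        he h (indMap k (C i) (hCB i) s x)
      rw [h1, DFinsupp.lapply_apply, hda h]
      rfl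
    set ψ : ∀ t : Q, ↥(setSpace k (C i) t) ≃ₗ[k] (Ns (σfun i)).space t :=
      fun t => LinearEquiv.ofBijective (φ t) (hφbij t) with hψ
    refine ⟨fun t => (ψ t).symm, ?_⟩
    intro s t h y
    show (ψ t).symm ((Ns (σfun i)).map h y)
      = (setModule k (C i) (blockRel_class_convex hB f hf (C i) (hclass i))).map h
          ((ψ s).symm y)
    apply (ψ t).injective
    rw [(ψ t).apply_symm_apply]
    have h2 := hφcomm s t h ((ψ s).symm y)
    have h3 : φ s ((ψ s).symm y) = y := (ψ s).apply_symm_apply y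
    rw [h3] at h2
    exact h2.symm
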